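/- Let χ ⊆ L be a clique in G, a ∈ R^E a partial PSD matrix, and F_χ = {X ∈ S^n_+ : X_ij = a_ij for all ij ∈ E(χ)}. If v_χ ∈ S^χ_+ exposes the minimal face face(a_χ, S^χ_+), then the n×n matrix P*_χ(v_χ) (equal to v_χ on the χ×χ block and zero elsewhere) exposes the minimal face face(F_χ, S^n_+). -/

import Mathlib

/-- `F` is a face of the convex set `C`. -/
def IsFaceOf {M : Type*} [AddCommGroup M] [Module ℝ M] (F C : Set M) : Prop :=
  F ⊆ C ∧ Convex ℝ F ∧ ∀ x ∈ C, ∀ y ∈ C, ∀ t : ℝ, t ∈ Set.Ioo (0 : ℝ) 1 →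
    t • x + (1 - t) • y ∈ F → x ∈ F ∧ y ∈ F

/-- The minimal face of `C` containing `S`. -/
def minFace {M : Type*} [AddCommGroup M] [Module ℝ M] (S C : Set M) : Set M :=
  ⋂₀ {F | IsFaceOf F C ∧ S ⊆ F}

/-!
Write `V = P*_χ(v_χ)`. Since `tr (V X) = tr (v_χ X_χ)` and `X_χ = a_χ` on `F_χ`, while `a_χ`
lies in the face exposed by `v_χ`, the face of `S^n₊` exposed by `V` contains `F_χ`.
Conversely, let `X ⪰ 0` with `tr (V X) = 0`. Then `X_χ` lies in the minimal face of `a_χ`,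
so `a_χ - ε X_χ ⪰ 0` for some `ε > 0`, and `ε X + P*_χ(a_χ - ε X_χ)` is a point of `F_χ`.
A face of a convex cone containing a sum of two cone elements contains both summands, so `X`
lies in every face containing `F_χ`.
-/

section Faces

variable {M : Type*} [AddCommGroup M] [Module ℝ M]

lemma minFace_subset {S F C : Set M} (hF : IsFaceOf F C) (hS : S ⊆ F) : minFace S C ⊆ F :=
  Set.sInter_subset_of_mem ⟨hF, hS⟩

lemma subset_minFace (S C : Set M) : S ⊆ minFace S C :=
  fun _ hx => Set.mem_sInter.2 fun _ hF => hF.2 hx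

lemma isFaceOf_setOf_eq_zero {C : Set M} (hC : Convex ℝ C) (f : M →ₗ[ℝ] ℝ)
    (hf : ∀ x ∈ C, 0 ≤ f x) : IsFaceOf {x | x ∈ C ∧ f x = 0} C := by
  refine ⟨fun x hx => hx.1, ?_, ?_⟩
  · rintro x ⟨hxC, hx⟩ y ⟨hyC, hy⟩ p q hp hq hpq
    exact ⟨hC hxC hyC hp hq hpq, by simp [hx, hy]⟩
  · rintro x hx y hy t ⟨ht₀, ht₁⟩ ⟨-, hxy⟩
    have hfx := hf x hx
    have hfy := hf y hy
    simp only [map_add, map_smul, smul_eq_mul] at hxy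
    exact ⟨⟨hx, by nlinarith⟩, ⟨hy, by nlinarith⟩⟩

lemma Convex.sub_smul_mem_of_le {C : Set M} (hC : Convex ℝ C) {a x : M} {ε ε₁ : ℝ}
    (ha : a ∈ C) (h₁ : a - ε₁ • x ∈ C) (hε₁ : 0 < ε₁) (hε : 0 ≤ ε) (hle : ε ≤ ε₁) :
    a - ε • x ∈ C := by
  have h := hC.add_smul_sub_mem ha h₁ ⟨div_nonneg hε hε₁.le, (div_le_one hε₁).2 hle⟩
  convert h using 1
  rw [sub_sub_cancel_left, smul_neg, smul_smul, div_mul_cancel₀ _ hε₁.ne',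
    ← sub_eq_add_neg]

namespace ConvexCone

variable (K : ConvexCone ℝ M)

/-- This set is the minimal face of `a` in `K`. -/
lemma isFaceOf_setOf_sub_smul_mem {a : M} (ha : a ∈ K) :
    IsFaceOf {x | x ∈ K ∧ ∃ ε : ℝ, 0 < ε ∧ a - ε • x ∈ K} K := by
  refine ⟨fun x hx => hx.1, ?_, ?_⟩
  · rintro x ⟨hxK, ε₁, hε₁, hx⟩ y ⟨hyK, ε₂, hε₂, hy⟩ p q hp hq hpq
    have hε : 0 < min ε₁ ε₂ := lt_min hε₁ hε₂
    have hx' := K.convex.sub_smul_mem_of_le ha hx hε₁ hε.le (min_le_left _ _)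
    have hy' := K.convex.sub_smul_mem_of_le ha hy hε₂ hε.le (min_le_right _ _)
    refine ⟨K.convex hxK hyK hp hq hpq, min ε₁ ε₂, hε, ?_⟩
    have h := K.convex hx' hy' hp hq hpq
    rw [SetLike.mem_coe] at h
    convert h using 1
    linear_combination (norm := module) (-hpq) • a
  · rintro x hx y hy t ⟨ht₀, ht₁⟩ ⟨-, ε, hε, hxy⟩
    have hy' : (ε * (1 - t)) • y ∈ K := K.smul_mem (by nlinarith) hy
    have hx' : (ε * t) • x ∈ K := K.smul_mem (by nlinarith) hx
    refine ⟨⟨hx, ε * t, by positivity, ?_⟩, ⟨hy, ε * (1 - t), by nlinarith, ?_⟩⟩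
    · convert K.add_mem hxy hy' using 1
      module
    · convert K.add_mem hxy hx' using 1
      module

lemma exists_sub_smul_mem_of_mem_minFace {a x : M} (ha : a ∈ K) (hx : x ∈ minFace {a} K) :
    ∃ ε : ℝ, 0 < ε ∧ a - ε • x ∈ K := by
  refine (minFace_subset (K.isFaceOf_setOf_sub_smul_mem ha) ?_ hx).2
  have hhalf : (1 / 2 : ℝ) • a ∈ K := K.smul_mem (by norm_num) ha
  exact Set.singleton_subset_iff.2 ⟨ha, 1 / 2, by norm_num, by convert hhalf using 1; module⟩

lemma mem_of_smul_add_mem {F : Set M} (hF : IsFaceOf F K) {x y : M} (hx : x ∈ K) (hy : y ∈ K)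
    {c : ℝ} (hc : 0 < c) (h : c • x + y ∈ F) : x ∈ F := by
  have hw : c ^ 2 • x + (c + 1) • y ∈ K := K.add_mem (K.smul_mem (by positivity) hx)
    (K.smul_mem (by positivity) hy)
  -- `c • x + y` is the combination of `x` and `c ^ 2 • x + (c + 1) • y` with weight `c / (c + 1)`.
  have ht : c / (c + 1) ∈ Set.Ioo (0 : ℝ) 1 :=
    ⟨by positivity, (div_lt_one (by positivity)).2 (by linarith)⟩
  refine (hF.2.2 x hx _ hw _ ht ?_).1
  convert h using 1
  match_scalars <;> field_simp <;> ring

lemma mem_minFace_of_smul_add_mem {S : Set M} {x y : M} (hx : x ∈ K) (hy : y ∈ K) {c : ℝ}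
    (hc : 0 < c) (h : c • x + y ∈ S) : x ∈ minFace S K :=
  Set.mem_sInter.2 fun _ hF => K.mem_of_smul_add_mem hF.1 hx hy hc (hF.2 h)

end ConvexCone

end Faces

namespace Matrix

section ExtendByZero

variable {ι R : Type*} [DecidableEq ι] [CommRing R] [StarRing R] (s : Finset ι)

def extendByZero (B : Matrix s s R) : Matrix ι ι R :=
  of fun i j => if hi : i ∈ s then if hj : j ∈ s then B ⟨i, hi⟩ ⟨j, hj⟩ else 0 else 0

lemma extendByZero_eq_conjTranspose_mul_mul (B : Matrix s s R) :
    extendByZero s B =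
      ((1 : Matrix ι ι R).submatrix ((↑) : s → ι) id)ᴴ * B *
        (1 : Matrix ι ι R).submatrix ((↑) : s → ι) id := by
  ext i j
  have hcoe : ∀ (k : ι) (l : s), ((l : ι) = k ↔ if hk : k ∈ s then l = ⟨k, hk⟩ else False) := by
    intro k l
    split_ifs with hk <;> simp only [Subtype.ext_iff, iff_false]
    rintro rfl
    exact hk l.2
  by_cases hi : i ∈ s <;> by_cases hj : j ∈ s <;>
    simp [extendByZero, mul_apply, one_apply, hi, hj, hcoe, @eq_comm _ i]

lemma trace_extendByZero_mul [Fintype ι] (B : Matrix s s R) (X : Matrix ι ι R) :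
    trace (extendByZero s B * X) = trace (B * X.submatrix ((↑) : s → ι) (↑)) := by
  set P : Matrix s ι R := (1 : Matrix ι ι R).submatrix (↑) id
  have hleft : P * X = X.submatrix ((↑) : s → ι) id := by
    simpa using one_submatrix_mul ((↑) : s → ι) (Equiv.refl ι) X
  have hright : X.submatrix ((↑) : s → ι) id * Pᴴ = X.submatrix ((↑) : s → ι) (↑) := by
    rw [conjTranspose_submatrix, conjTranspose_one]
    simpa using mul_submatrix_one (Equiv.refl ι) ((↑) : s → ι) (X.submatrix ((↑) : s → ι) id)
  rw [extendByZero_eq_conjTranspose_mul_mul, Matrix.mul_assoc, Matrix.mul_assoc, trace_mul_comm,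
    Matrix.mul_assoc, hleft, hright]

lemma PosSemidef.extendByZero [Fintype ι] [PartialOrder R] [StarOrderedRing R]
    {B : Matrix s s R} (hB : B.PosSemidef) : (extendByZero s B).PosSemidef := by
  rw [extendByZero_eq_conjTranspose_mul_mul]
  exact hB.conjTranspose_mul_mul_same _

end ExtendByZero

section Cone

variable {m : Type*} [Fintype m]

def posSemidefCone : ConvexCone ℝ (Matrix m m ℝ) where
  carrier := {A | A.PosSemidef}
  smul_mem' _ hc _ hA := hA.smul hc.le
  add_mem' _ hA _ hB := hA.add hB

open scoped ComplexOrder in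
lemma PosSemidef.trace_mul_nonneg {𝕜 : Type*} [RCLike 𝕜] [DecidableEq m]
    {A B : Matrix m m 𝕜} (hA : A.PosSemidef) (hB : B.PosSemidef) : 0 ≤ trace (A * B) := by
  obtain ⟨C, rfl⟩ : ∃ C : Matrix m m 𝕜, A = star C * C := by
    open scoped MatrixOrder in
    exact CStarAlgebra.nonneg_iff_eq_star_mul_self.mp hA.nonneg
  rw [Matrix.mul_assoc, trace_mul_comm, star_eq_conjTranspose]
  exact (hB.mul_mul_conjTranspose_same C).trace_nonneg

lemma isFaceOf_setOf_trace_mul_eq_zero [DecidableEq m] {V : Matrix m m ℝ} (hV : V.PosSemidef) :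
    IsFaceOf {X | X.PosSemidef ∧ trace (V * X) = 0} {X : Matrix m m ℝ | X.PosSemidef} :=
  isFaceOf_setOf_eq_zero (posSemidefCone (m := m)).convex
    ((traceLinearMap m ℝ ℝ).comp (LinearMap.mulLeft ℝ V)) fun _ hX => hV.trace_mul_nonneg hX

end Cone

end Matrix

open Matrix in
theorem clique_facial_reduction_psd_general {n : ℕ} (E : Set (Fin n × Fin n))
    (χ : Finset (Fin n))
    (hclique : ∀ i ∈ χ, ∀ j ∈ χ, (i, j) ∈ E)
    (a : Fin n → Fin n → ℝ)
    (hpartial : ∀ S : Finset (Fin n), (∀ i ∈ S, ∀ j ∈ S, (i, j) ∈ E) →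
      Matrix.PosSemidef (Matrix.of fun i j : S => a i.val j.val))
    (vχ : Matrix χ χ ℝ) (hvχ : vχ.PosSemidef)
    (hexpose : minFace {Matrix.of fun i j : χ => a i.val j.val}
        {A : Matrix χ χ ℝ | A.PosSemidef}
      = {A : Matrix χ χ ℝ | A.PosSemidef ∧ Matrix.trace (vχ * A) = 0}) :
    (Matrix.of fun i j : Fin n =>
        if hi : i ∈ χ then if hj : j ∈ χ then vχ ⟨i, hi⟩ ⟨j, hj⟩ else 0
        else 0).PosSemidef ∧
    minFace {X : Matrix (Fin n) (Fin n) ℝ | X.PosSemidef ∧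
        ∀ i ∈ χ, ∀ j ∈ χ, X i j = a i j}
        {X : Matrix (Fin n) (Fin n) ℝ | X.PosSemidef}
      = {X : Matrix (Fin n) (Fin n) ℝ | X.PosSemidef ∧
          Matrix.trace ((Matrix.of fun i j : Fin n =>
            if hi : i ∈ χ then if hj : j ∈ χ then vχ ⟨i, hi⟩ ⟨j, hj⟩ else 0
            else 0) * X) = 0} := by
  set aχ : Matrix χ χ ℝ := of fun i j : χ => a i j
  change (extendByZero χ vχ).PosSemidef ∧ minFace _ _ =
    {X | X.PosSemidef ∧ trace (extendByZero χ vχ * X) = 0}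
  have haχ : aχ.PosSemidef := hpartial χ hclique
  have hface : ∀ A, A ∈ minFace {aχ} {A : Matrix χ χ ℝ | A.PosSemidef} ↔
      A.PosSemidef ∧ trace (vχ * A) = 0 :=
    fun A => Set.ext_iff.1 hexpose A
  refine ⟨hvχ.extendByZero χ, (minFace_subset
    (isFaceOf_setOf_trace_mul_eq_zero (hvχ.extendByZero χ)) ?_).antisymm ?_⟩
  · rintro X ⟨hX, hXa⟩
    have hXχ : X.submatrix ((↑) : χ → Fin n) (↑) = aχ := ext fun i j => hXa _ i.2 _ j.2
    refine ⟨hX, ?_⟩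
    rw [trace_extendByZero_mul, hXχ]
    exact ((hface aχ).1 (subset_minFace _ _ rfl)).2
  · rintro X ⟨hX, hVX⟩
    obtain ⟨ε, hε, hD⟩ := posSemidefCone.exists_sub_smul_mem_of_mem_minFace haχ
      ((hface _).2 ⟨hX.submatrix _, by rwa [← trace_extendByZero_mul]⟩)
    refine posSemidefCone.mem_minFace_of_smul_add_mem hX (PosSemidef.extendByZero χ hD) hε
      ⟨(hX.smul hε.le).add (PosSemidef.extendByZero χ hD), fun i hi j hj => ?_⟩
    simp [extendByZero, hi, hj, aχ]

/-- Clique facial reduction for PSD completions: for a clique `χ ⊆ L` of `G` and a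
partial PSD matrix `a`, if `v_χ` exposes the minimal face of `S^χ₊` containing the
principal submatrix `a_χ`, then the zero-padded matrix `P*_χ(v_χ)` exposes the minimal
face of `S^n₊` containing `F_χ = {X ⪰ 0 : X_ij = a_ij, ij ∈ E(χ)}`. -/
theorem clique_facial_reduction_psd {n : ℕ} (E : Set (Fin n × Fin n))
    (hEsym : ∀ i j : Fin n, (i, j) ∈ E → (j, i) ∈ E)
    (χ : Finset (Fin n))
    (hχL : ∀ i ∈ χ, (i, i) ∈ E)
    (hclique : ∀ i ∈ χ, ∀ j ∈ χ, (i, j) ∈ E)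
    (a : Fin n → Fin n → ℝ)
    (hpartial : ∀ S : Finset (Fin n), (∀ i ∈ S, ∀ j ∈ S, (i, j) ∈ E) →
      Matrix.PosSemidef (Matrix.of fun i j : S => a i.val j.val))
    (vχ : Matrix χ χ ℝ) (hvχ : vχ.PosSemidef)
    (hexpose : minFace {Matrix.of fun i j : χ => a i.val j.val}
        {A : Matrix χ χ ℝ | A.PosSemidef}
      = {A : Matrix χ χ ℝ | A.PosSemidef ∧ Matrix.trace (vχ * A) = 0}) :
    (Matrix.of fun i j : Fin n =>
        if hi : i ∈ χ then if hj : j ∈ χ then vχ ⟨i, hi⟩ ⟨j, hj⟩ else 0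
        else 0).PosSemidef ∧
    minFace {X : Matrix (Fin n) (Fin n) ℝ | X.PosSemidef ∧
        ∀ i ∈ χ, ∀ j ∈ χ, X i j = a i j}
        {X : Matrix (Fin n) (Fin n) ℝ | X.PosSemidef}
      = {X : Matrix (Fin n) (Fin n) ℝ | X.PosSemidef ∧
          Matrix.trace ((Matrix.of fun i j : Fin n =>
            if hi : i ∈ χ then if hj : j ∈ χ then vχ ⟨i, hi⟩ ⟨j, hj⟩ else 0
            else 0) * X) = 0} :=
  clique_facial_reduction_psd_general E χ hclique a hpartial vχ hvχ hexpose
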